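/- arXiv:1710.09313 — 3 statements merged into one kernel-verified Lean document; each statement's English description precedes it below -/
import Mathlib

section
/- For integers d > e ≥ 2, the sum 2·( Σ_{j₀=1}^{e} Σ_{j₁=e+1}^{d−1} C(j₁−e, 2)·2^{j₀+d−j₁−2} + (C(d−e, 2) + C(d−e+1, 2))·Σ_{j₀=2}^{e} 2^{j₀−2} + C(d−e, 2) ) is strictly less than 2^{d+1}. -/
/-! Write `d = e + m + 1`. The double sum factors as `(2 ^ e - 1) * T m` with
`T m = ∑ i < m, C(i + 1, 2) * 2 ^ (m - 1 - i)`, and `T (m + 1) = 2 * T m + C(m + 1, 2)` gives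
`2 * T m = 2 ^ (m + 2) - (m ^ 2 + 3 * m + 4)`. The other sums are geometric, and
`C(m + 1, 2) + C(m + 2, 2) = (m + 1) ^ 2`. Altogether twice the count is exactly
`2 ^ (d + 1) - 2 ^ (d - e + 1) - (d - e + 2) * 2 ^ e + 2`. -/

open Finset

lemma sum_range_two_pow_add_one (n : ℕ) : ∑ i ∈ range n, 2 ^ i + 1 = 2 ^ n := by
  simpa [one_add_one_eq_two] using geom_sum_mul_add (1 : ℕ) n

lemma two_mul_choose_two_succ (n : ℕ) : 2 * (n + 1).choose 2 = n * (n + 1) := by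
  rw [Nat.choose_two_right, Nat.add_sub_cancel, mul_comm (n + 1)]
  exact Nat.mul_div_cancel' (Nat.even_mul_succ_self n).two_dvd

lemma choose_two_succ_add_choose_two_succ_succ (n : ℕ) :
    (n + 1).choose 2 + (n + 2).choose 2 = (n + 1) ^ 2 := by
  have h := two_mul_choose_two_succ n
  rw [Nat.choose_succ_succ' (n + 1) 1, Nat.choose_one_right]
  nlinarith

lemma two_mul_sum_range_choose_two_mul_two_pow (m : ℕ) :
    2 * ∑ i ∈ range m, (i + 1).choose 2 * 2 ^ (m - 1 - i) + (m ^ 2 + 3 * m + 4) = 2 ^ (m + 2) := by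
  induction m with
  | zero => simp
  | succ m ih =>
    have hdouble : ∑ i ∈ range m, (i + 1).choose 2 * 2 ^ (m - i)
        = 2 * ∑ i ∈ range m, (i + 1).choose 2 * 2 ^ (m - 1 - i) := by
      rw [mul_sum]
      refine sum_congr rfl fun i hi => ?_
      rw [show m - i = m - 1 - i + 1 by grind, pow_succ]
      ring
    have hc := two_mul_choose_two_succ m
    rw [sum_range_succ, Nat.add_sub_cancel, hdouble, Nat.sub_self, pow_zero, mul_one,
      pow_succ 2 (m + 2)]
    linear_combination 2 * ih + hc

lemma two_mul_sum_Icc_two_pow_sub_two_add_two {e : ℕ} (he : 1 ≤ e) :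
    2 * ∑ j ∈ Icc 2 e, 2 ^ (j - 2) + 2 = 2 ^ e := by
  obtain ⟨n, rfl⟩ : ∃ n, e = n + 1 := ⟨e - 1, by omega⟩
  rw [← Ico_add_one_right_eq_Icc, sum_Ico_eq_sum_range, show n + 1 + 1 - 2 = n by omega]
  simp only [Nat.add_sub_cancel_left]
  rw [pow_succ, ← sum_range_two_pow_add_one n]
  ring

lemma sum_Icc_sum_Icc_choose_two_mul_two_pow (e m : ℕ) :
    ∑ j₀ ∈ Icc 1 e, ∑ j₁ ∈ Icc (e + 1) (e + m),
        (j₁ - e).choose 2 * 2 ^ (j₀ + (e + m + 1) - j₁ - 2)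
      = (∑ i ∈ range e, 2 ^ i) * ∑ i ∈ range m, (i + 1).choose 2 * 2 ^ (m - 1 - i) := by
  rw [sum_mul_sum, ← Ico_add_one_right_eq_Icc, sum_Ico_eq_sum_range, Nat.add_sub_cancel]
  refine sum_congr rfl fun a _ => ?_
  rw [← Ico_add_one_right_eq_Icc, sum_Ico_eq_sum_range, show e + m + 1 - (e + 1) = m by omega]
  refine sum_congr rfl fun i hi => ?_
  rw [mem_range] at hi
  rw [show e + 1 + i - e = i + 1 by omega,
    show 1 + a + (e + m + 1) - (e + 1 + i) - 2 = a + (m - 1 - i) by omega, pow_add]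
  ring

def carryPatternCount (d e : ℕ) : ℕ :=
  ∑ j₀ ∈ Icc 1 e, ∑ j₁ ∈ Icc (e + 1) (d - 1), (j₁ - e).choose 2 * 2 ^ (j₀ + d - j₁ - 2)
    + ((d - e).choose 2 + (d - e + 1).choose 2) * ∑ j₀ ∈ Icc 2 e, 2 ^ (j₀ - 2)
    + (d - e).choose 2

theorem two_mul_carryPatternCount_add {d e : ℕ} (he : 1 ≤ e) (hed : e < d) :
    2 * carryPatternCount d e + 2 ^ (d - e + 1) + 2 ^ e * (d - e + 2) = 2 ^ (d + 1) + 2 := by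
  obtain ⟨m, rfl⟩ : ∃ m, d = e + m + 1 := ⟨d - e - 1, by omega⟩
  rw [carryPatternCount, Nat.add_sub_cancel, show e + m + 1 - e = m + 1 by omega,
    sum_Icc_sum_Icc_choose_two_mul_two_pow, choose_two_succ_add_choose_two_succ_succ,
    show e + m + 1 + 1 = e + (m + 2) by ring, pow_add 2 e]
  have hT := two_mul_sum_range_choose_two_mul_two_pow m
  have hB := two_mul_sum_Icc_two_pow_sub_two_add_two he
  have hc := two_mul_choose_two_succ m
  rw [← sum_range_two_pow_add_one e] at hB ⊢
  linear_combination (∑ i ∈ range e, 2 ^ i) * hT + (m + 1) ^ 2 * hB + hc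

theorem carry_pattern_count_lt (d e : ℕ) (he : 2 ≤ e) (hed : e < d) :
    2 * (∑ j₀ ∈ Finset.Icc 1 e, ∑ j₁ ∈ Finset.Icc (e + 1) (d - 1),
          (j₁ - e).choose 2 * 2 ^ (j₀ + d - j₁ - 2)
        + ((d - e).choose 2 + (d - e + 1).choose 2) * ∑ j₀ ∈ Finset.Icc 2 e, 2 ^ (j₀ - 2)
        + (d - e).choose 2)
      < 2 ^ (d + 1) := by
  show 2 * carryPatternCount d e < 2 ^ (d + 1)
  have hclosed := two_mul_carryPatternCount_add (by omega : 1 ≤ e) hed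
  have hpow : 2 ^ 2 ≤ 2 ^ (d - e + 1) := Nat.pow_le_pow_right (by norm_num) (by omega)
  omega
end

section
/- For integers d > e ≥ 2, the following closed-form identity holds: 2·( Σ_{j₀=1}^{e} Σ_{j₁=e+1}^{d−1} C(j₁−e, 2)·2^{j₀+d−j₁−2} + (C(d−e,2)+C(d−e+1,2))·Σ_{j₀=2}^{e} 2^{j₀−2} + C(d−e,2) ) = ((2^e − 1)/2^{e−1})·(2^d − 2^e) − (d−e)·2^e, as an identity of rational numbers. -/
/-!
Writing `d = e + b + 1` and `m = j₁ - e`, the double sum factors as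
`(∑ j₀, 2 ^ (j₀ - 1)) * ∑ m ≤ b, C(m, 2) 2 ^ (b - m)`, and the second factor equals
`2 ^ (b + 1) - 1 - (b + 1) - C(b + 1, 2)`. What is left are two geometric sums and a
polynomial identity in `2 ^ (e - 1)`, `2 ^ b`, `b` and `C(b + 1, 2)`.
-/

open Finset

theorem sum_Icc_pow_sub_mul_sub_one {R : Type*} [Ring R] (x : R) (k n : ℕ) :
    (∑ j ∈ Icc k n, x ^ (j - k)) * (x - 1) = x ^ (n + 1 - k) - 1 := by
  rw [← Ico_add_one_right_eq_Icc, sum_Ico_eq_sum_range]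
  simpa using geom_sum_mul x (n + 1 - k)

theorem sum_range_choose_succ_add_choose (n k : ℕ) :
    ∑ i ∈ range (k + 1), (n + 1).choose i + n.choose k = 2 * ∑ i ∈ range (k + 1), n.choose i := by
  induction k with
  | zero => simp
  | succ k ih =>
    rw [sum_range_succ, sum_range_succ _ (k + 1), Nat.choose_succ_succ']
    linarith [Nat.choose_succ_succ' n k]

/-- Both sides count the subsets of `{0, …, n}`: those with more than `k` elements are
sorted by their `(k+1)`-st smallest element `m`. -/
theorem sum_range_choose_mul_two_pow_add_sum_range_choose (n k : ℕ) :
    ∑ m ∈ range (n + 1), m.choose k * 2 ^ (n - m) + ∑ i ∈ range (k + 1), (n + 1).choose i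
      = 2 ^ (n + 1) := by
  induction n with
  | zero => cases k <;> simp [sum_range_succ', Nat.choose_eq_zero_of_lt]
  | succ n ih =>
    have hdouble : ∑ m ∈ range (n + 1), m.choose k * 2 ^ (n + 1 - m)
        = 2 * ∑ m ∈ range (n + 1), m.choose k * 2 ^ (n - m) := by
      rw [mul_sum]
      refine sum_congr rfl fun m hm => ?_
      rw [Nat.sub_add_comm (mem_range_succ_iff.mp hm), pow_succ]
      ring
    rw [sum_range_succ, hdouble, Nat.sub_self, pow_zero, mul_one, pow_succ _ (n + 1), ← ih]
    linarith [sum_range_choose_succ_add_choose (n + 1) k]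

theorem sum_range_choose_two_mul_two_pow (b : ℕ) :
    ∑ m ∈ range (b + 1), (m.choose 2 : ℚ) * 2 ^ (b - m)
      = 2 ^ (b + 1) - (1 + (b + 1) + (b + 1).choose 2) := by
  have h := sum_range_choose_mul_two_pow_add_sum_range_choose b 2
  rw [show ∑ i ∈ range 3, (b + 1).choose i = 1 + (b + 1) + (b + 1).choose 2 by
    simp [sum_range_succ]] at h
  rw [eq_sub_iff_add_eq]
  exact_mod_cast h

theorem sum_Icc_two_pow_sub (k n : ℕ) :
    ∑ j ∈ Icc k n, (2 : ℚ) ^ (j - k) = 2 ^ (n + 1 - k) - 1 := by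
  have h := sum_Icc_pow_sub_mul_sub_one (2 : ℚ) k n
  norm_num at h
  exact h

theorem sum_Icc_choose_sub_mul_two_pow (e b j : ℕ) (hj : 1 ≤ j) :
    ∑ i ∈ Icc (e + 1) (e + b), ((i - e).choose 2 : ℚ) * 2 ^ (j + (e + b + 1) - i - 2)
      = 2 ^ (j - 1) * ∑ m ∈ range (b + 1), (m.choose 2 : ℚ) * 2 ^ (b - m) := by
  rw [← map_add_left_Icc, sum_map, range_eq_Ico, Ico_add_one_right_eq_Icc,
    ← sum_Ioc_add_eq_sum_Icc (Nat.zero_le b), ← Icc_add_one_left_eq_Ioc]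
  simp only [zero_add, Nat.choose_zero_succ, Nat.cast_zero, zero_mul, add_zero, mul_sum]
  refine sum_congr rfl fun m hm => ?_
  have hmb := (mem_Icc.mp hm).2
  rw [addLeftEmbedding_apply, Nat.add_sub_cancel_left,
    show j + (e + b + 1) - (e + m) - 2 = (j - 1) + (b - m) by omega, pow_add]
  ring

theorem carry_pattern_count_closed_form (d e : ℕ) (he : 2 ≤ e) (hed : e < d) :
    (2 : ℚ) * (∑ j₀ ∈ Finset.Icc 1 e, ∑ j₁ ∈ Finset.Icc (e + 1) (d - 1),
          ((j₁ - e).choose 2 : ℚ) * 2 ^ (j₀ + d - j₁ - 2)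
        + (((d - e).choose 2 : ℚ) + ((d - e + 1).choose 2 : ℚ)) *
            ∑ j₀ ∈ Finset.Icc 2 e, (2 : ℚ) ^ (j₀ - 2)
        + ((d - e).choose 2 : ℚ))
      = ((2 ^ e - 1) / 2 ^ (e - 1)) * (2 ^ d - 2 ^ e) - ((d : ℚ) - e) * 2 ^ e := by
  obtain ⟨b, rfl⟩ : ∃ b, d = e + b + 1 := ⟨d - e - 1, by omega⟩
  have hinner : ∀ j ∈ Icc 1 e, ∑ i ∈ Icc (e + 1) (e + b + 1 - 1),
      ((i - e).choose 2 : ℚ) * 2 ^ (j + (e + b + 1) - i - 2)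
        = 2 ^ (j - 1) * ∑ m ∈ range (b + 1), (m.choose 2 : ℚ) * 2 ^ (b - m) :=
    fun j hj => sum_Icc_choose_sub_mul_two_pow e b j (mem_Icc.mp hj).1
  rw [sum_congr rfl hinner, ← sum_mul, sum_Icc_two_pow_sub, sum_Icc_two_pow_sub,
    sum_range_choose_two_mul_two_pow, show e + b + 1 - e = b + 1 by omega,
    Nat.choose_succ_succ' (b + 1) 1, Nat.choose_one_right]
  obtain ⟨a, rfl⟩ : ∃ a, e = a + 1 := ⟨e - 1, by omega⟩
  rw [Nat.add_sub_cancel]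
  field_simp
  push_cast
  ring
end

section
/- For all integers m ≥ 3, 2·Σ_{k=2}^{m−1} Σ_{l=1}^{k−1} (l−1)(k−l)·C(m−l−1, k−l) = 2^{m−1}·(m−5) + 2m + 2. -/
open Finset

lemma sumE (N : ℕ) : ∑ i ∈ Finset.range N, ((i:ℤ)+1)*2^i = ((N:ℤ)-1)*2^N + 1 := by
  induction N with
  | zero => simp
  | succ n ih => rw [Finset.sum_range_succ, ih]; push_cast; ring

lemma sumF (N : ℕ) : ∑ i ∈ Finset.range N, (i:ℤ)*((i:ℤ)+1)*2^i = ((N:ℤ)^2-3*N+4)*2^N - 4 := by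
  induction N with
  | zero => simp
  | succ n ih => rw [Finset.sum_range_succ, ih]; push_cast; ring

lemma sumG (n : ℕ) : ∑ j ∈ Finset.range (n+1), ((n:ℤ)-j)*((j:ℤ)+1)*2^j
    = 2^(n+1)*((n:ℤ)-2) + n + 4 := by
  have : ∀ j : ℕ, ((n:ℤ)-j)*((j:ℤ)+1)*2^j
      = (n:ℤ)*(((j:ℤ)+1)*2^j) - (j:ℤ)*((j:ℤ)+1)*2^j := by intro j; ring
  simp only [this]
  rw [Finset.sum_sub_distrib, ← Finset.mul_sum, sumE, sumF]
  push_cast; ring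

lemma key1 (p : ℕ) : ∑ j ∈ Finset.Icc 1 (p+1), j * ((p+1).choose j) = (p+1) * 2^p := by
  rw [← Finset.Ico_add_one_right_eq_Icc, Finset.sum_Ico_eq_sum_range]
  have h : ∀ i : ℕ, (1+i) * ((p+1).choose (1+i)) = (p+1) * p.choose i := by
    intro i
    rw [Nat.add_comm 1 i, Nat.mul_comm]
    exact (Nat.add_one_mul_choose_eq p i).symm
  simp only [Nat.add_sub_cancel, h]  -- p+1+1-1 = p+1
  rw [← Finset.mul_sum, Nat.sum_range_choose]

theorem B_C_pair_count (m : ℕ) (hm : 3 ≤ m) :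
    (2 * ∑ k ∈ Finset.Icc 2 (m - 1), ∑ l ∈ Finset.Icc 1 (k - 1),
          ((l : ℤ) - 1) * ((k : ℤ) - l) * ((m - l - 1).choose (k - l) : ℤ))
        = 2 ^ (m - 1) * ((m : ℤ) - 5) + 2 * m + 2 ∧
      2 ^ (m - 1) * ((m : ℤ) - 5) ≤
        2 * ∑ k ∈ Finset.Icc 2 (m - 1), ∑ l ∈ Finset.Icc 1 (k - 1),
          ((l : ℤ) - 1) * ((k : ℤ) - l) * ((m - l - 1).choose (k - l) : ℤ) := by
  obtain ⟨n, rfl⟩ : ∃ n, m = n + 3 := ⟨m - 3, by omega⟩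
  have hkey : (∑ k ∈ Finset.Icc 2 (n + 3 - 1), ∑ l ∈ Finset.Icc 1 (k - 1),
      ((l : ℤ) - 1) * ((k : ℤ) - l) * ((n + 3 - l - 1).choose (k - l) : ℤ))
      = 2^(n+1)*((n:ℤ)-2) + n + 4 := by
    have hm1 : n + 3 - 1 = n + 2 := by omega
    rw [hm1]
    -- swap sums
    rw [Finset.sum_comm' (t' := Finset.Icc 1 (n+1))
        (s' := fun l => Finset.Icc (l+1) (n+2))
        (by intro k l; simp only [Finset.mem_Icc]; omega)]
    -- inner sum over k : reindex and evaluate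
    have hinner : ∀ l ∈ Finset.Icc 1 (n+1),
        (∑ k ∈ Finset.Icc (l+1) (n+2),
          ((l : ℤ) - 1) * ((k : ℤ) - l) * ((n + 3 - l - 1).choose (k - l) : ℤ))
        = ((l:ℤ)-1) * ((n+2-l : ℕ):ℤ) * 2^(n+1-l) := by
      intro l hl
      rw [Finset.mem_Icc] at hl
      obtain ⟨q, hq⟩ : ∃ q, n + 2 - l = q + 1 := ⟨n + 1 - l, by omega⟩
      have h2 : n + 3 - l - 1 = q + 1 := by omega
      have h3 : Finset.Icc (l+1) (n+2) = Finset.Icc (l+1) (l + (q+1)) := by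
        congr 1; omega
      rw [h3, ← Finset.map_add_left_Icc 1 (q+1) l, Finset.sum_map]
      have h4 : ∀ j ∈ Finset.Icc 1 (q+1),
          ((l : ℤ) - 1) * ((((addLeftEmbedding l) j : ℕ) : ℤ) - (l : ℤ)) *
            (((n + 3 - l - 1).choose ((addLeftEmbedding l) j - l) : ℕ) : ℤ)
          = ((l:ℤ)-1) * ((j:ℤ) * (((q+1).choose j : ℕ) : ℤ)) := by
        intro j hj
        have ha : (addLeftEmbedding l) j = l + j := rfl
        have hb : l + j - l = j := by omega
        rw [ha, h2, hb]
        push_cast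
        ring
      rw [Finset.sum_congr rfl h4, ← Finset.mul_sum]
      have h5 : (∑ j ∈ Finset.Icc 1 (q+1), (j:ℤ) * ((q+1).choose j : ℤ))
          = ((q+1) * 2^q : ℕ) := by
        rw [← key1 q]; push_cast; ring_nf
      rw [h5, hq]
      have h6 : n + 1 - l = q := by omega
      rw [h6]; push_cast; ring
    rw [Finset.sum_congr rfl hinner]
    -- reindex l over range and reflect
    rw [show Finset.Icc 1 (n+1) = Finset.Ico 1 (n+2) from (Finset.Ico_add_one_right_eq_Icc ..).symm,
      Finset.sum_Ico_eq_sum_range]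
    have h7 : n + 2 - 1 = n + 1 := by omega
    rw [h7, ← Finset.sum_range_reflect]
    have h8 : ∀ j ∈ Finset.range (n+1),
        (((1 + (n + 1 - 1 - j) : ℕ):ℤ) - 1) * ((n + 2 - (1 + (n + 1 - 1 - j)) : ℕ):ℤ)
          * 2^(n + 1 - (1 + (n + 1 - 1 - j)))
        = ((n:ℤ)-j)*((j:ℤ)+1)*2^j := by
      intro j hj
      rw [Finset.mem_range] at hj
      have e1 : n + 1 - 1 - j = n - j := by omega
      have e2 : n + 2 - (1 + (n - j)) = j + 1 := by omega
      have e3 : n + 1 - (1 + (n - j)) = j := by omega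
      rw [e1, e2, e3]
      have e4 : ((1 + (n - j) : ℕ):ℤ) = (n:ℤ) - j + 1 := by push_cast [Nat.cast_sub (by omega : j ≤ n)]; ring
      rw [e4]; push_cast; ring
    rw [Finset.sum_congr rfl h8, sumG]
  constructor
  · rw [hkey]
    have : n + 3 - 1 = n + 2 := by omega
    rw [this]; push_cast; ring
  · rw [hkey]
    have : n + 3 - 1 = n + 2 := by omega
    rw [this]; push_cast
    have h0 : (0:ℤ) ≤ (n:ℤ) := Int.ofNat_nonneg n
    have h2 : (2:ℤ)^(n+2)*((n:ℤ)+3-5) = 2*((2:ℤ)^(n+1)*((n:ℤ)-2)) := by ring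
    rw [h2]
    linarith
end
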